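/- Let d ≥ 1 and l ≥ 1 be integers, let M ⊆ P([d]) be non-empty, and let A be an order-d lattice subset. Suppose that for every B ∈ M and every non-empty C ⊆ B, the intersection of A with every C-subspace has C*-covering number at most l, where C* = {C \ {j} : j ∈ C}. Then |A| ≤ l^τ · cov_M(A), where τ is the largest size of any B ∈ M. -/

import Mathlib

open Finset

/-- A `B`-subspace of `[n₁]×⋯×[n_d]`: the set of points agreeing with some point `u`
on all coordinates outside `B`. -/
def IsBSubspace {d : ℕ} (n : Fin d → ℕ) (B : Finset (Fin d))
    (S : Set (∀ j, Fin (n j))) : Prop :=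
  ∃ u : ∀ j, Fin (n j), S = {x | ∀ j ∉ B, x j = u j}

/-- An `M`-subspace: a `B`-subspace for some `B ∈ M`. -/
def IsMSubspace {d : ℕ} (n : Fin d → ℕ) (M : Finset (Finset (Fin d)))
    (S : Set (∀ j, Fin (n j))) : Prop :=
  ∃ B ∈ M, IsBSubspace n B S

/-- The `M`-covering number: the least `k` such that `A` is covered by `k` `M`-subspaces. -/
noncomputable def covM {d : ℕ} (n : Fin d → ℕ) (M : Finset (Finset (Fin d)))
    (A : Set (∀ j, Fin (n j))) : ℕ :=
  sInf {k | ∃ S : Fin k → Set (∀ j, Fin (n j)),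
    (∀ i, IsMSubspace n M (S i)) ∧ A ⊆ ⋃ i, S i}

/-!
Induction on `|C|`: a `C*`-cover of `A ∩ S` (for `S` a `C`-subspace) by at most `l` pieces
consists of `(C \ {j})`-subspaces, each meeting `A` in at most `l ^ (|C| - 1)` points, while an
`∅`-subspace is a single point. Hence `|A ∩ S| ≤ l ^ |B| ≤ l ^ τ` for every `M`-subspace `S`,
and summing over an optimal `M`-cover of `A` gives the bound.
-/

lemma IsBSubspace.exists_eq_singleton_of_empty {d : ℕ} {n : Fin d → ℕ}
    {S : Set (∀ j, Fin (n j))} (hS : IsBSubspace n ∅ S) : ∃ u, S = {u} := by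
  obtain ⟨u, rfl⟩ := hS
  exact ⟨u, by ext x; simp [funext_iff]⟩

section Covering

variable {d : ℕ} {n : Fin d → ℕ} {M : Finset (Finset (Fin d))}

lemma exists_cover_card_covM (hM : M.Nonempty) (A : Set (∀ j, Fin (n j))) :
    ∃ S : Fin (covM n M A) → Set (∀ j, Fin (n j)),
      (∀ i, IsMSubspace n M (S i)) ∧ A ⊆ ⋃ i, S i := by
  obtain ⟨B, hB⟩ := hM
  let e := Fintype.equivFin (∀ j, Fin (n j))
  refine Nat.sInf_mem (s := {k | ∃ S : Fin k → Set (∀ j, Fin (n j)),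
    (∀ i, IsMSubspace n M (S i)) ∧ A ⊆ ⋃ i, S i}) ⟨Fintype.card (∀ j, Fin (n j)),
    fun i => {x | ∀ j ∉ B, x j = e.symm i j}, fun i => ⟨B, hB, _, rfl⟩, fun x _ => ?_⟩
  exact Set.mem_iUnion.mpr ⟨e x, by simp⟩

lemma ncard_le_covM_mul (hM : M.Nonempty) {A : Set (∀ j, Fin (n j))} {m : ℕ}
    (hA : ∀ S, IsMSubspace n M S → (A ∩ S).ncard ≤ m) :
    A.ncard ≤ covM n M A * m := by
  obtain ⟨S, hS, hcover⟩ := exists_cover_card_covM hM A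
  calc A.ncard = (⋃ i, A ∩ S i).ncard := by
        rw [← Set.inter_iUnion, Set.inter_eq_left.mpr hcover]
    _ ≤ ∑ i, (A ∩ S i).ncard := Set.ncard_iUnion_le_of_fintype _
    _ ≤ ∑ _i : Fin (covM n M A), m := Finset.sum_le_sum fun i _ => hA _ (hS i)
    _ = covM n M A * m := by simp

end Covering

lemma ncard_inter_le_pow_card {d l : ℕ} {n : Fin d → ℕ} {A : Set (∀ j, Fin (n j))}
    {C : Finset (Fin d)}
    (hC : ∀ C' ⊆ C, C'.Nonempty → ∀ S, IsBSubspace n C' S →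
      covM n (C'.image fun j => C'.erase j) (A ∩ S) ≤ l)
    {S : Set (∀ j, Fin (n j))} (hS : IsBSubspace n C S) :
    (A ∩ S).ncard ≤ l ^ C.card := by
  induction C using Finset.strongInduction generalizing S with
  | H C ih =>
  rcases C.eq_empty_or_nonempty with rfl | hCne
  · obtain ⟨u, rfl⟩ := hS.exists_eq_singleton_of_empty
    simpa using Set.ncard_le_ncard (Set.inter_subset_right (s := A)) (Set.finite_singleton u)
  have hslice : ∀ T, IsMSubspace n (C.image fun j => C.erase j) T →
      (A ∩ S ∩ T).ncard ≤ l ^ (C.card - 1) := by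
    rintro T ⟨_, hB', hT⟩
    obtain ⟨j, hj, rfl⟩ := Finset.mem_image.mp hB'
    calc (A ∩ S ∩ T).ncard ≤ (A ∩ T).ncard :=
          Set.ncard_le_ncard (fun x hx => ⟨hx.1.1, hx.2⟩)
      _ ≤ l ^ (C.erase j).card :=
          ih _ (C.erase_ssubset hj) (fun C' hC' => hC C' (hC'.trans (C.erase_subset j))) hT
      _ = l ^ (C.card - 1) := by rw [Finset.card_erase_of_mem hj]
  calc (A ∩ S).ncard ≤ covM n (C.image fun j => C.erase j) (A ∩ S) * l ^ (C.card - 1) :=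
        ncard_le_covM_mul (hCne.image _) hslice
    _ ≤ l * l ^ (C.card - 1) := Nat.mul_le_mul_right _ (hC C subset_rfl hCne S hS)
    _ = l ^ C.card := by rw [← pow_succ', Nat.sub_add_cancel hCne.card_pos]

theorem bounded_size_from_no_significant_subspace_general {d l : ℕ} (hl : 0 < l)
    (n : Fin d → ℕ)
    (M : Finset (Finset (Fin d))) (hM : M.Nonempty)
    (A : Set (∀ j, Fin (n j)))
    (h : ∀ B ∈ M, ∀ C ⊆ B, C.Nonempty → ∀ S, IsBSubspace n C S →
      covM n (C.image fun j => C.erase j) (A ∩ S) ≤ l) :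
    A.ncard ≤ l ^ (M.sup Finset.card) * covM n M A := by
  rw [mul_comm]
  refine ncard_le_covM_mul hM fun S ⟨B, hB, hS⟩ => ?_
  calc (A ∩ S).ncard ≤ l ^ B.card := ncard_inter_le_pow_card (h B hB) hS
    _ ≤ l ^ M.sup Finset.card := Nat.pow_le_pow_right hl (Finset.le_sup hB)

theorem bounded_size_from_no_significant_subspace {d l : ℕ} (hd : 0 < d) (hl : 0 < l)
    (n : Fin d → ℕ) (hn : ∀ j, 0 < n j)
    (M : Finset (Finset (Fin d))) (hM : M.Nonempty)
    (A : Set (∀ j, Fin (n j)))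
    (h : ∀ B ∈ M, ∀ C ⊆ B, C.Nonempty → ∀ S, IsBSubspace n C S →
      covM n (C.image fun j => C.erase j) (A ∩ S) ≤ l) :
    A.ncard ≤ l ^ (M.sup Finset.card) * covM n M A :=
  bounded_size_from_no_significant_subspace_general hl n M hM A h
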